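/- Let v ∈ P and let ω ∈ Γ be a common solution, i.e., ω simultaneously attains max_{ω'∈Γ} g̃_v(ω') and max_{ω'∈Γ} g̃_v^{(j)}(ω') for every j ∈ {1,…,L}. Then ω satisfies the balanced condition. (Lemma 12 of the paper.) -/

import Mathlib

open Finset
open scoped Classical

namespace HetTS

noncomputable section

variable {K M : ℕ}

/-- Number of clients having access to arm `i`. -/
def Mi (S : Fin M → Finset (Fin K)) (i : Fin K) : ℕ :=
  (Finset.univ.filter fun m => i ∈ S m).card

/-- The mean reward `μ_i(v)` of arm `i`: average of the means of arm `i` across the clients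
having access to it. -/
def armMean (S : Fin M → Finset (Fin K)) (v : Fin M → Fin K → ℝ) (i : Fin K) : ℝ :=
  (1 / (Mi S i : ℝ)) * ∑ m ∈ Finset.univ.filter (fun m => i ∈ S m), v m i

/-- Arm `i` is the (unique) best arm of client `m` under instance `v`. -/
def isBest (S : Fin M → Finset (Fin K)) (v : Fin M → Fin K → ℝ) (m : Fin M) (i : Fin K) :
    Prop :=
  i ∈ S m ∧ ∀ j ∈ S m, j ≠ i → armMean S v j < armMean S v i

/-- The set `P` of problem instances having a unique best arm at each client. -/
def PSet (S : Fin M → Finset (Fin K)) : Set (Fin M → Fin K → ℝ) :=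
  {v | ∀ m, ∃ i, isBest S v m i}

/-- The set of alternative instances `Alt(v)`: instances in `P` whose tuple of best arms
differs from that of `v`. -/
def AltSet (S : Fin M → Finset (Fin K)) (v : Fin M → Fin K → ℝ) :
    Set (Fin M → Fin K → ℝ) :=
  {v' | v' ∈ PSet S ∧ ¬ ∀ (m : Fin M) (i : Fin K), isBest S v m i ↔ isBest S v' m i}

/-- The set `Γ` of allocations: families `(ω_{i,m})_{m, i ∈ S_m}` of nonnegative weights
summing to one for each client (represented as functions vanishing off the support). -/
def Gam (S : Fin M → Finset (Fin K)) : Set (Fin M → Fin K → ℝ) :=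
  {ω | (∀ m, ∀ i ∈ S m, 0 ≤ ω m i) ∧ (∀ m, ∑ i ∈ S m, ω m i = 1) ∧
    ∀ m, ∀ i, i ∉ S m → ω m i = 0}

/-- `g_v(ω)`, the inner infimum over alternative instances. -/
def gfun (S : Fin M → Finset (Fin K)) (v ω : Fin M → Fin K → ℝ) : ℝ :=
  sInf {x | ∃ v' ∈ AltSet S v,
    x = ∑ m : Fin M, ∑ i ∈ S m, ω m i * (v m i - v' m i) ^ 2 / 2}

/-- The gap `Δ_i(v)`. -/
def Delta (S : Fin M → Finset (Fin K)) (v : Fin M → Fin K → ℝ) (i : Fin K) : ℝ :=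
  sInf {x | ∃ m : Fin M, i ∈ S m ∧
    x = |armMean S v i - sSup {y | ∃ j ∈ S m, j ≠ i ∧ y = armMean S v j}|}

/-- The denominator `(1/M_i²) ∑_{m : i ∈ S_m} 1/ω_{i,m}`. -/
def armDenom (S : Fin M → Finset (Fin K)) (ω : Fin M → Fin K → ℝ) (i : Fin K) : ℝ :=
  (1 / (Mi S i : ℝ) ^ 2) * ∑ m ∈ Finset.univ.filter (fun m => i ∈ S m), 1 / ω m i

/-- The simplified objective `g̃_v(ω)`. -/
def gtilde (S : Fin M → Finset (Fin K)) (v ω : Fin M → Fin K → ℝ) : ℝ :=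
  if ∃ m, ∃ i ∈ S m, ω m i = 0 then 0
  else sInf {x | ∃ i : Fin K, x = (Delta S v i) ^ 2 / 2 / armDenom S ω i}

/-- The relation `R` on arms: two arms are related if some client has access to both. -/
def armRel (S : Fin M → Finset (Fin K)) (i₁ i₂ : Fin K) : Prop :=
  ∃ m, i₁ ∈ S m ∧ i₂ ∈ S m

/-- The equivalence class `Q` of arm `i` under the smallest equivalence relation
containing `R`. -/
def armClass (S : Fin M → Finset (Fin K)) (i : Fin K) : Set (Fin K) :=
  {i' | Relation.EqvGen (armRel S) i i'}

/-- Same equivalence class, as a `Finset`. -/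
def classFinset (S : Fin M → Finset (Fin K)) (i : Fin K) : Finset (Fin K) :=
  Finset.univ.filter fun i' => Relation.EqvGen (armRel S) i i'

/-- The per-class objective `g̃_v^{(j)}(ω)` where `Q` is the `j`-th equivalence class. -/
def gtildeC (S : Fin M → Finset (Fin K)) (v : Fin M → Fin K → ℝ) (Q : Set (Fin K))
    (ω : Fin M → Fin K → ℝ) : ℝ :=
  if ∃ m, ∃ i ∈ S m, i ∈ Q ∧ ω m i = 0 then 0
  else sInf {x | ∃ i ∈ Q, x = (Delta S v i) ^ 2 / armDenom S ω i}

/-- `ω` is a common solution: it simultaneously attains `max_{ω'∈Γ} g̃_v(ω')` and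
`max_{ω'∈Γ} g̃_v^{(j)}(ω')` for every equivalence class `Q_j`. -/
def IsCommonSol (S : Fin M → Finset (Fin K)) (v ω : Fin M → Fin K → ℝ) : Prop :=
  ω ∈ Gam S ∧ (∀ ω' ∈ Gam S, gtilde S v ω' ≤ gtilde S v ω) ∧
    ∀ i : Fin K, ∀ ω' ∈ Gam S,
      gtildeC S v (armClass S i) ω' ≤ gtildeC S v (armClass S i) ω

/-- The balanced condition. -/
def BalancedCond (S : Fin M → Finset (Fin K)) (ω : Fin M → Fin K → ℝ) : Prop :=
  ∀ m₁ m₂ : Fin M, ∀ i₁ i₂ : Fin K, i₁ ∈ S m₁ → i₂ ∈ S m₁ → i₁ ∈ S m₂ → i₂ ∈ S m₂ →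
    ω m₁ i₁ / ω m₁ i₂ = ω m₂ i₁ / ω m₂ i₂

/-- The pseudo-balanced condition for instance `v`. -/
def PseudoBalancedCond (S : Fin M → Finset (Fin K)) (v ω : Fin M → Fin K → ℝ) : Prop :=
  ∀ i₁ i₂ : Fin K, Relation.EqvGen (armRel S) i₁ i₂ →
    (Delta S v i₁) ^ 2 / armDenom S ω i₁ = (Delta S v i₂) ^ 2 / armDenom S ω i₂

/-- The matrix `H(v)` (restricted to a class it gives `H^{(j)}(v)`). -/
def Hmat (S : Fin M → Finset (Fin K)) (v : Fin M → Fin K → ℝ) (i₁ i₂ : Fin K) : ℝ :=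
  (1 / ((Delta S v i₁) ^ 2 * (Mi S i₁ : ℝ) ^ 2)) *
    ((Finset.univ.filter fun m => i₁ ∈ S m ∧ i₂ ∈ S m).card : ℝ)

/-- The per-arm objective value. -/
def fv (S : Fin M → Finset (Fin K)) (v ω : Fin M → Fin K → ℝ) (i : Fin K) : ℝ :=
  (Delta S v i) ^ 2 / armDenom S ω i

lemma Eset_fin (f : Fin K → ℝ) (Q : Set (Fin K)) : {x | ∃ i ∈ Q, x = f i}.Finite := by
  have h : {x | ∃ i ∈ Q, x = f i} = f '' Q := by
    ext x; simp [Set.mem_image, eq_comm]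
  rw [h]; exact (Q.toFinite).image f

lemma Mi_pos (S : Fin M → Finset (Fin K)) (hcov : ∀ i : Fin K, ∃ m, i ∈ S m) (i : Fin K) :
    0 < (Mi S i : ℝ) := by
  obtain ⟨m, hm⟩ := hcov i
  have : 0 < Mi S i := Finset.card_pos.mpr ⟨m, by simp [hm]⟩
  exact_mod_cast this

lemma armDenom_pos (S : Fin M → Finset (Fin K)) (hcov : ∀ i : Fin K, ∃ m, i ∈ S m)
    (ω : Fin M → Fin K → ℝ) (hpos : ∀ m, ∀ i ∈ S m, 0 < ω m i) (i : Fin K) :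
    0 < armDenom S ω i := by
  obtain ⟨m, hm⟩ := hcov i
  have hMi := Mi_pos S hcov i
  unfold armDenom
  apply mul_pos (by positivity)
  apply Finset.sum_pos
  · intro m' hm'
    simp only [Finset.mem_filter] at hm'
    exact one_div_pos.mpr (hpos m' i hm'.2)
  · exact ⟨m, by simp [hm]⟩

lemma Delta_pos (S : Fin M → Finset (Fin K)) (hS : ∀ m, 2 ≤ (S m).card)
    (hcov : ∀ i : Fin K, ∃ m, i ∈ S m) (v : Fin M → Fin K → ℝ) (hv : v ∈ PSet S)
    (i : Fin K) : 0 < Delta S v i := by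
  set T : Set ℝ := {x | ∃ m : Fin M, i ∈ S m ∧
    x = |armMean S v i - sSup {y | ∃ j ∈ S m, j ≠ i ∧ y = armMean S v j}|} with hT
  have hfin : T.Finite := by
    apply Set.Finite.subset (Set.finite_range
      (fun m : Fin M => |armMean S v i - sSup {y | ∃ j ∈ S m, j ≠ i ∧ y = armMean S v j}|))
    rintro x ⟨m, -, rfl⟩; exact ⟨m, rfl⟩
  obtain ⟨m₀, hm₀⟩ := hcov i
  have hne : T.Nonempty := ⟨_, m₀, hm₀, rfl⟩
  have hmem : sInf T ∈ T := hne.csInf_mem hfin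
  have hDelta : Delta S v i = sInf T := rfl
  rw [hDelta]
  obtain ⟨m, him, heq⟩ := hmem
  rw [heq]
  set Y : Set ℝ := {y | ∃ j ∈ S m, j ≠ i ∧ y = armMean S v j} with hY
  have hYfin : Y.Finite := by
    apply Set.Finite.subset (Set.finite_range (fun j : Fin K => armMean S v j))
    rintro y ⟨j, -, -, rfl⟩; exact ⟨j, rfl⟩
  obtain ⟨j₀, hj₀, hj₀i⟩ := Finset.exists_mem_ne (by have := hS m; omega : 1 < (S m).card) i
  have hYne : Y.Nonempty := ⟨_, j₀, hj₀, hj₀i, rfl⟩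
  have hYmem : sSup Y ∈ Y := hYne.csSup_mem hYfin
  obtain ⟨j₁, hj₁, hj₁i, hj₁eq⟩ := hYmem
  obtain ⟨a, haS, hbest⟩ := hv m
  rw [abs_pos, sub_ne_zero]
  by_cases hia : i = a
  · subst hia
    rw [hj₁eq]
    exact (hbest j₁ hj₁ hj₁i).ne'
  · have h1 : armMean S v a ≤ sSup Y :=
      le_csSup hYfin.bddAbove ⟨a, haS, fun h => hia h.symm, rfl⟩
    have h2 : armMean S v i < armMean S v a := hbest i him hia
    exact ne_of_lt (lt_of_lt_of_le h2 h1)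

lemma gtildeC_eq (S : Fin M → Finset (Fin K)) (v : Fin M → Fin K → ℝ) (Q : Set (Fin K))
    (ω : Fin M → Fin K → ℝ) (hpos : ∀ m, ∀ i ∈ S m, 0 < ω m i) :
    gtildeC S v Q ω = sInf {x | ∃ i ∈ Q, x = fv S v ω i} := by
  unfold gtildeC
  rw [if_neg]
  · rfl
  · rintro ⟨m, i, hi, -, h0⟩
    exact (hpos m i hi).ne' h0

lemma gtildeC_le_fv (S : Fin M → Finset (Fin K)) (v : Fin M → Fin K → ℝ) (Q : Set (Fin K))
    (ω : Fin M → Fin K → ℝ) (hpos : ∀ m, ∀ i ∈ S m, 0 < ω m i) (i : Fin K) (hi : i ∈ Q) :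
    gtildeC S v Q ω ≤ fv S v ω i := by
  rw [gtildeC_eq S v Q ω hpos]
  exact csInf_le (Eset_fin (fv S v ω) Q).bddBelow ⟨i, hi, rfl⟩

lemma lt_gtildeC (S : Fin M → Finset (Fin K)) (v : Fin M → Fin K → ℝ) (Q : Set (Fin K))
    (ω : Fin M → Fin K → ℝ) (hpos : ∀ m, ∀ i ∈ S m, 0 < ω m i) (i₀ : Fin K) (hi₀ : i₀ ∈ Q)
    (F : ℝ) (h : ∀ i ∈ Q, F < fv S v ω i) : F < gtildeC S v Q ω := by
  rw [gtildeC_eq S v Q ω hpos]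
  have hmem : sInf {x | ∃ i ∈ Q, x = fv S v ω i} ∈ {x | ∃ i ∈ Q, x = fv S v ω i} :=
    Set.Nonempty.csInf_mem ⟨_, i₀, hi₀, rfl⟩ (Eset_fin _ _)
  obtain ⟨j, hj, hjeq⟩ := hmem
  rw [hjeq]
  exact h j hj
/-- The uniform allocation. -/
def unif (S : Fin M → Finset (Fin K)) : Fin M → Fin K → ℝ :=
  fun m i => if i ∈ S m then ((S m).card : ℝ)⁻¹ else 0

lemma unif_pos (S : Fin M → Finset (Fin K)) (hS : ∀ m, 2 ≤ (S m).card) :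
    ∀ m, ∀ i ∈ S m, 0 < unif S m i := by
  intro m i hi
  have h : (0:ℝ) < ((S m).card : ℝ) := by
    exact_mod_cast (by have := hS m; omega : 0 < (S m).card)
  simp only [unif, if_pos hi]
  exact inv_pos.mpr h

lemma unif_mem (S : Fin M → Finset (Fin K)) (hS : ∀ m, 2 ≤ (S m).card) :
    unif S ∈ Gam S := by
  refine ⟨fun m i hi => (unif_pos S hS m i hi).le, fun m => ?_, fun m i hi => by simp [unif, hi]⟩
  have hc : ((S m).card : ℝ) ≠ 0 := by
    have := hS m; positivity
  have h : ∑ i ∈ S m, unif S m i = ∑ i ∈ S m, ((S m).card : ℝ)⁻¹ :=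
    Finset.sum_congr rfl (fun i hi => by simp [unif, hi])
  rw [h, Finset.sum_const, nsmul_eq_mul, mul_inv_cancel₀ hc]

lemma pos_of_sol (S : Fin M → Finset (Fin K)) (hS : ∀ m, 2 ≤ (S m).card)
    (hcov : ∀ i : Fin K, ∃ m, i ∈ S m) (v : Fin M → Fin K → ℝ) (hv : v ∈ PSet S)
    (ω : Fin M → Fin K → ℝ) (hω : IsCommonSol S v ω) :
    ∀ m, ∀ i ∈ S m, 0 < ω m i := by
  intro m i hi
  rcases (hω.1.1 m i hi).lt_or_eq with h | h
  · exact h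
  exfalso
  have h0 : gtildeC S v (armClass S i) ω = 0 := by
    unfold gtildeC
    rw [if_pos ⟨m, i, hi, Relation.EqvGen.refl i, h.symm⟩]
  have hle := hω.2.2 i (unif S) (unif_mem S hS)
  have hpos : 0 < gtildeC S v (armClass S i) (unif S) := by
    have h01 : (0:ℝ) < gtildeC S v (armClass S i) (unif S) ↔ True := by
      rw [iff_true]
      refine lt_gtildeC S v _ (unif S) (unif_pos S hS) i (Relation.EqvGen.refl i) 0 ?_
      intro j _
      unfold fv
      have hd := armDenom_pos S hcov (unif S) (unif_pos S hS) j
      have hD := Delta_pos S hS hcov v hv j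
      positivity
    simpa using h01
  rw [h0] at hle
  exact absurd (lt_of_lt_of_le hpos hle) (lt_irrefl 0)

lemma gtildeC_sol_pos (S : Fin M → Finset (Fin K)) (hS : ∀ m, 2 ≤ (S m).card)
    (hcov : ∀ i : Fin K, ∃ m, i ∈ S m) (v : Fin M → Fin K → ℝ) (hv : v ∈ PSet S)
    (ω : Fin M → Fin K → ℝ) (hpos : ∀ m, ∀ i ∈ S m, 0 < ω m i) (i₀ : Fin K) :
    0 < gtildeC S v (armClass S i₀) ω := by
  refine lt_gtildeC S v _ ω hpos i₀ (Relation.EqvGen.refl i₀) 0 ?_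
  intro j _
  unfold fv
  have hd := armDenom_pos S hcov ω hpos j
  have hD := Delta_pos S hS hcov v hv j
  positivity

/-- Move `δ` of weight from arm `j` to arm `k` at client `m`. -/
def tweak (ω : Fin M → Fin K → ℝ) (m : Fin M) (j k : Fin K) (δ : ℝ) :
    Fin M → Fin K → ℝ :=
  fun m' i => ω m' i + (if m' = m ∧ i = j then -δ else 0) + (if m' = m ∧ i = k then δ else 0)

lemma tweak_self_j (ω : Fin M → Fin K → ℝ) (m : Fin M) {j k : Fin K} (δ : ℝ) (hjk : j ≠ k) :
    tweak ω m j k δ m j = ω m j - δ := by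
  simp [tweak, hjk, sub_eq_add_neg]

lemma tweak_self_k (ω : Fin M → Fin K → ℝ) (m : Fin M) {j k : Fin K} (δ : ℝ) (hjk : j ≠ k) :
    tweak ω m j k δ m k = ω m k + δ := by
  simp [tweak, hjk.symm]

lemma tweak_other (ω : Fin M → Fin K → ℝ) (m : Fin M) (j k : Fin K) (δ : ℝ) (m' : Fin M)
    (i : Fin K) (h : m' ≠ m ∨ (i ≠ j ∧ i ≠ k)) : tweak ω m j k δ m' i = ω m' i := by
  rcases h with h | ⟨h1, h2⟩
  · simp [tweak, h]
  · simp [tweak, h1, h2]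

lemma tweak_mem_Gam (S : Fin M → Finset (Fin K)) (ω : Fin M → Fin K → ℝ) (hω : ω ∈ Gam S)
    {m : Fin M} {j k : Fin K} {δ : ℝ} (hj : j ∈ S m) (hk : k ∈ S m) (hjk : j ≠ k)
    (h1 : 0 ≤ ω m j - δ) (h2 : 0 ≤ ω m k + δ) : tweak ω m j k δ ∈ Gam S := by
  refine ⟨?_, ?_, ?_⟩
  · intro m' i hi
    by_cases hm : m' = m
    · subst hm
      by_cases hij : i = j
      · subst hij; rw [tweak_self_j ω m' δ hjk]; exact h1
      by_cases hik : i = k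
      · subst hik; rw [tweak_self_k ω m' δ hjk]; exact h2
      rw [tweak_other ω m' j k δ m' i (Or.inr ⟨hij, hik⟩)]
      exact hω.1 m' i hi
    · rw [tweak_other ω m j k δ m' i (Or.inl hm)]
      exact hω.1 m' i hi
  · intro m'
    unfold tweak
    rw [Finset.sum_add_distrib, Finset.sum_add_distrib]
    by_cases hm : m' = m
    · subst hm
      rw [hω.2.1 m']
      simp only [true_and]
      rw [Finset.sum_ite_eq' (S m') j (fun _ => -δ), Finset.sum_ite_eq' (S m') k (fun _ => δ)]
      simp [hj, hk]
    · simp only [hm, false_and, if_false]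
      rw [hω.2.1 m']
      simp
  · intro m' i hi
    have hij : ¬(m' = m ∧ i = j) := by
      rintro ⟨rfl, rfl⟩; exact hi hj
    have hik : ¬(m' = m ∧ i = k) := by
      rintro ⟨rfl, rfl⟩; exact hi hk
    simp [tweak, hij, hik, hω.2.2 m' i hi]

lemma armDenom_tweak_other (S : Fin M → Finset (Fin K)) (ω : Fin M → Fin K → ℝ)
    (m : Fin M) (j k : Fin K) (δ : ℝ) (i : Fin K) (hij : i ≠ j) (hik : i ≠ k) :
    armDenom S (tweak ω m j k δ) i = armDenom S ω i := by
  unfold armDenom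
  congr 1
  apply Finset.sum_congr rfl
  intro m' _
  rw [tweak_other ω m j k δ m' i (Or.inr ⟨hij, hik⟩)]

lemma armDenom_tweak_j (S : Fin M → Finset (Fin K)) (ω : Fin M → Fin K → ℝ)
    {m : Fin M} {j k : Fin K} (δ : ℝ) (hj : j ∈ S m) (hjk : j ≠ k) :
    armDenom S (tweak ω m j k δ) j
      = armDenom S ω j + (1 / (Mi S j : ℝ) ^ 2) * (1 / (ω m j - δ) - 1 / (ω m j)) := by
  unfold armDenom
  have hmem : m ∈ Finset.univ.filter (fun m' => j ∈ S m') := by simp [hj]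
  rw [← Finset.sum_erase_add _ _ hmem, ← Finset.sum_erase_add _ (fun m' => 1 / ω m' j) hmem]
  have h1 : ∑ m' ∈ (Finset.univ.filter (fun m' => j ∈ S m')).erase m,
      1 / tweak ω m j k δ m' j
      = ∑ m' ∈ (Finset.univ.filter (fun m' => j ∈ S m')).erase m, 1 / ω m' j :=
    Finset.sum_congr rfl (fun m' hm' => by
      rw [tweak_other ω m j k δ m' j (Or.inl (Finset.ne_of_mem_erase hm'))])
  rw [h1, tweak_self_j ω m δ hjk]
  ring

lemma armDenom_tweak_k (S : Fin M → Finset (Fin K)) (ω : Fin M → Fin K → ℝ)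
    {m : Fin M} {j k : Fin K} (δ : ℝ) (hk : k ∈ S m) (hjk : j ≠ k) :
    armDenom S (tweak ω m j k δ) k
      = armDenom S ω k + (1 / (Mi S k : ℝ) ^ 2) * (1 / (ω m k + δ) - 1 / (ω m k)) := by
  unfold armDenom
  have hmem : m ∈ Finset.univ.filter (fun m' => k ∈ S m') := by simp [hk]
  rw [← Finset.sum_erase_add _ _ hmem, ← Finset.sum_erase_add _ (fun m' => 1 / ω m' k) hmem]
  have h1 : ∑ m' ∈ (Finset.univ.filter (fun m' => k ∈ S m')).erase m,
      1 / tweak ω m j k δ m' k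
      = ∑ m' ∈ (Finset.univ.filter (fun m' => k ∈ S m')).erase m, 1 / ω m' k :=
    Finset.sum_congr rfl (fun m' hm' => by
      rw [tweak_other ω m j k δ m' k (Or.inl (Finset.ne_of_mem_erase hm'))])
  rw [h1, tweak_self_k ω m δ hjk]
  ring
lemma ineq1 {a c s t : ℝ} (ha : 0 < a) (hc : 0 < c) (hs : 0 < s) (ht : 0 < t)
    (htc : t < c) (hkey : t * (a * (a + s)) < s * (c * (c - t))) :
    1 / (a + s) - 1 / a + (1 / (c - t) - 1 / c) < 0 := by
  have hct : 0 < c - t := by linarith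
  have has : 0 < a + s := by linarith
  have h1 : 1 / (a + s) - 1 / a = -(s / (a * (a + s))) := by
    field_simp
    ring_nf
  have h2 : 1 / (c - t) - 1 / c = t / (c * (c - t)) := by
    rw [div_sub_div _ _ (ne_of_gt hct) (ne_of_gt hc)]
    congr 1
    · ring
    · ring
  rw [h1, h2]
  have h3 : t / (c * (c - t)) < s / (a * (a + s)) := by
    rw [div_lt_div_iff₀ (by positivity) (by positivity)]
    linarith
  linarith

lemma closure_lemma (S : Fin M → Finset (Fin K)) (A : Fin K → Prop)
    (H : ∀ p q : Fin K, A p → armRel S p q → A q) :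
    ∀ x y : Fin K, Relation.EqvGen (armRel S) x y → (A x ↔ A y) := by
  intro x y h
  induction h with
  | rel p q hpq =>
      constructor
      · intro hp; exact H p q hp hpq
      · intro hq
        obtain ⟨m, h1, h2⟩ := hpq
        exact H q p hq ⟨m, h2, h1⟩
  | refl p => exact Iff.rfl
  | symm p q _ ih => exact ih.symm
  | trans p q r _ _ ih1 ih2 => exact ih1.trans ih2

lemma MPL (S : Fin M → Finset (Fin K)) (hS : ∀ m, 2 ≤ (S m).card)
    (hcov : ∀ i : Fin K, ∃ m, i ∈ S m) (v : Fin M → Fin K → ℝ) (hv : v ∈ PSet S)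
    (i₀ : Fin K) (F : ℝ) (hFpos : 0 < F)
    (hopt : ∀ ω' ∈ Gam S, gtildeC S v (armClass S i₀) ω' ≤ F) :
    ∀ n : ℕ, ∀ W : Fin M → Fin K → ℝ, W ∈ Gam S →
      (∀ m, ∀ i ∈ S m, 0 < W m i) →
      (∀ i ∈ armClass S i₀, F ≤ fv S v W i) →
      (∃ i ∈ armClass S i₀, F < fv S v W i) →
      (Finset.univ.filter
        (fun i => i ∈ armClass S i₀ ∧ ¬ F < fv S v W i)).card ≤ n →
      False := by
  intro n
  induction n with
  | zero =>
      intro W hmem hpos hge hex hcard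
      have hT : Finset.univ.filter
          (fun i => i ∈ armClass S i₀ ∧ ¬ F < fv S v W i) = ∅ :=
        Finset.card_eq_zero.mp (Nat.le_zero.mp hcard)
      have hstrict : ∀ i ∈ armClass S i₀, F < fv S v W i := by
        intro i hi
        by_contra hlt
        have : i ∈ Finset.univ.filter
            (fun i => i ∈ armClass S i₀ ∧ ¬ F < fv S v W i) := by
          simp only [Finset.mem_filter]
          exact ⟨Finset.mem_univ i, hi, hlt⟩
        rw [hT] at this
        exact absurd this (Finset.notMem_empty i)
      have h1 : F < gtildeC S v (armClass S i₀) W :=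
        lt_gtildeC S v _ W hpos i₀ (Relation.EqvGen.refl i₀) F hstrict
      exact absurd (hopt W hmem) (not_le.mpr h1)
  | succ n ih =>
      intro W hmem hpos hge hex hcard
      set T := Finset.univ.filter
        (fun i => i ∈ armClass S i₀ ∧ ¬ F < fv S v W i) with hTdef
      by_cases hTe : T = ∅
      · -- same as base case
        have hstrict : ∀ i ∈ armClass S i₀, F < fv S v W i := by
          intro i hi
          by_contra hlt
          have : i ∈ T := by
            rw [hTdef, Finset.mem_filter]
            exact ⟨Finset.mem_univ i, hi, hlt⟩
          rw [hTe] at this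
          exact absurd this (Finset.notMem_empty i)
        have h1 : F < gtildeC S v (armClass S i₀) W :=
          lt_gtildeC S v _ W hpos i₀ (Relation.EqvGen.refl i₀) F hstrict
        exact absurd (hopt W hmem) (not_le.mpr h1)
      -- T is nonempty; find a crossing edge
      obtain ⟨k₀, hk₀⟩ := Finset.nonempty_iff_ne_empty.mpr hTe
      rw [hTdef, Finset.mem_filter] at hk₀
      obtain ⟨-, hk₀Q, hk₀f⟩ := hk₀
      obtain ⟨j₀, hj₀Q, hj₀f⟩ := hex
      by_cases hcr : ∃ p q : Fin K, (p ∈ armClass S i₀ ∧ F < fv S v W p) ∧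
          armRel S p q ∧ ¬(q ∈ armClass S i₀ ∧ F < fv S v W q)
      · obtain ⟨p, q, hp, hpq, hq⟩ := hcr
        -- q is in the class
        have hqQ : q ∈ armClass S i₀ :=
          Relation.EqvGen.trans _ _ _ hp.1 (Relation.EqvGen.rel _ _ hpq)
        have hqf : ¬ F < fv S v W q := fun h => hq ⟨hqQ, h⟩
        have hpnq : p ≠ q := by
          rintro rfl; exact hq hp
        obtain ⟨m, hpm, hqm⟩ := hpq
        -- choose δ
        set x := W m p with hxdef
        have hx : 0 < x := hpos m p hpm
        set y := W m q with hydef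
        have hy : 0 < y := hpos m q hqm
        have hΔp : 0 < Delta S v p := Delta_pos S hS hcov v hv p
        have hΔq : 0 < Delta S v q := Delta_pos S hS hcov v hv q
        set Dp := armDenom S W p with hDpdef
        have hDp : 0 < Dp := armDenom_pos S hcov W hpos p
        have hw : 0 < 1 / (Mi S p : ℝ) ^ 2 := by
          have := Mi_pos S hcov p; positivity
        have hgap : Dp < Delta S v p ^ 2 / F := by
          have h1 : F < Delta S v p ^ 2 / Dp := hp.2
          rw [lt_div_iff₀ hDp] at h1
          rw [lt_div_iff₀ hFpos]
          linarith [h1]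
        set B := 1 / x + (Delta S v p ^ 2 / F - Dp) / (1 / (Mi S p : ℝ) ^ 2) with hBdef
        have hxB : 1 / x < B := by
          have : 0 < (Delta S v p ^ 2 / F - Dp) / (1 / (Mi S p : ℝ) ^ 2) := by
            apply div_pos (by linarith) hw
          linarith
        have hB : 0 < B := lt_trans (by positivity) hxB
        have h1Bx : 1 / B < x := by
          have h := one_div_lt_one_div_of_lt (by positivity : (0:ℝ) < 1 / x) hxB
          rwa [one_div_one_div] at h
        set δ := (x - 1 / B) / 2 with hδdef
        have hδ : 0 < δ := by
          have : 0 < x - 1 / B := by linarith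
          positivity
        have hxδ : 1 / B < x - δ := by
          rw [hδdef]; have : 0 < 1 / B := by positivity
          linarith
        have hxδ0 : 0 < x - δ := lt_trans (by positivity) hxδ
        have hinv : 1 / (x - δ) < B := by
          have h := one_div_lt_one_div_of_lt (by positivity : (0:ℝ) < 1 / B) hxδ
          rwa [one_div_one_div] at h
        -- the new allocation
        set ω₂ := tweak W m p q δ with hω₂def
        have hmem₂ : ω₂ ∈ Gam S :=
          tweak_mem_Gam S W hmem hpm hqm hpnq (by linarith) (by linarith)
        have hpos₂ : ∀ m', ∀ i ∈ S m', 0 < ω₂ m' i := by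
          intro m' i hi
          by_cases hm : m' = m
          · subst hm
            by_cases hip : i = p
            · subst hip; rw [hω₂def, tweak_self_j W m' δ hpnq]; exact hxδ0
            by_cases hiq : i = q
            · subst hiq; rw [hω₂def, tweak_self_k W m' δ hpnq]; linarith
            · rw [hω₂def, tweak_other W m' p q δ m' i (Or.inr ⟨hip, hiq⟩)]
              exact hpos m' i hi
          · rw [hω₂def, tweak_other W m p q δ m' i (Or.inl hm)]
            exact hpos m' i hi
        -- arm values
        have hDp₂ : armDenom S ω₂ p < Delta S v p ^ 2 / F := by
          rw [hω₂def, armDenom_tweak_j S W δ hpm hpnq]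
          have h2 : 1 / (x - δ) - 1 / x < B - 1 / x := by linarith
          have h3 : (1 / (Mi S p : ℝ) ^ 2) * (1 / (W m p - δ) - 1 / (W m p))
              < (1 / (Mi S p : ℝ) ^ 2) * (B - 1 / x) := by
            apply mul_lt_mul_of_pos_left _ hw
            rw [← hxdef]; exact h2
          have h4 : (1 / (Mi S p : ℝ) ^ 2) * (B - 1 / x)
              = Delta S v p ^ 2 / F - Dp := by
            rw [hBdef]
            have he : 1 / x + (Delta S v p ^ 2 / F - Dp) / (1 / (Mi S p : ℝ) ^ 2) - 1 / x
                = (Delta S v p ^ 2 / F - Dp) / (1 / (Mi S p : ℝ) ^ 2) := by ring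
            rw [he, mul_comm, div_mul_cancel₀ _ (ne_of_gt hw)]
          rw [h4] at h3
          linarith
        have hfp₂ : F < fv S v ω₂ p := by
          have hD2pos : 0 < armDenom S ω₂ p := armDenom_pos S hcov ω₂ hpos₂ p
          unfold fv
          rw [lt_div_iff₀ hD2pos]
          rw [lt_div_iff₀ hFpos] at hDp₂
          linarith
        have hfq₂ : F < fv S v ω₂ q := by
          have hDq₂lt : armDenom S ω₂ q < armDenom S W q := by
            rw [hω₂def, armDenom_tweak_k S W δ hqm hpnq]
            have h2 : 1 / (W m q + δ) - 1 / (W m q) < 0 := by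
              have : 1 / (y + δ) < 1 / y :=
                one_div_lt_one_div_of_lt hy (by linarith)
              rw [← hydef]; linarith
            have hw' : 0 < 1 / (Mi S q : ℝ) ^ 2 := by
              have := Mi_pos S hcov q; positivity
            nlinarith
          have hD2pos : 0 < armDenom S ω₂ q := armDenom_pos S hcov ω₂ hpos₂ q
          calc F ≤ fv S v W q := hge q hqQ
            _ < fv S v ω₂ q := by
                unfold fv
                exact div_lt_div_of_pos_left (by positivity) hD2pos hDq₂lt
        have hfother : ∀ i : Fin K, i ≠ p → i ≠ q → fv S v ω₂ i = fv S v W i := by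
          intro i hip hiq
          unfold fv
          rw [hω₂def, armDenom_tweak_other S W m p q δ i hip hiq]
        -- apply induction hypothesis
        apply ih ω₂ hmem₂ hpos₂
        · intro i hi
          by_cases hip : i = p
          · subst hip; exact (hfp₂).le
          by_cases hiq : i = q
          · subst hiq; exact (hfq₂).le
          · rw [hfother i hip hiq]; exact hge i hi
        · exact ⟨p, hp.1, hfp₂⟩
        · have hsub : Finset.univ.filter
              (fun i => i ∈ armClass S i₀ ∧ ¬ F < fv S v ω₂ i) ⊆ T.erase q := by
            intro i hi
            rw [Finset.mem_filter] at hi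
            obtain ⟨-, hiQ, hif⟩ := hi
            have hiq : i ≠ q := by rintro rfl; exact hif hfq₂
            have hip : i ≠ p := by rintro rfl; exact hif hfp₂
            rw [Finset.mem_erase]
            refine ⟨hiq, ?_⟩
            rw [hTdef, Finset.mem_filter]
            rw [hfother i hip hiq] at hif
            exact ⟨Finset.mem_univ i, hiQ, hif⟩
          have hqT : q ∈ T := by
            rw [hTdef, Finset.mem_filter]
            exact ⟨Finset.mem_univ q, hqQ, hqf⟩
          have h1 := Finset.card_le_card hsub
          rw [Finset.card_erase_of_mem hqT] at h1
          omega
      · -- no crossing edge: contradiction via closure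
        exfalso
        push_neg at hcr
        have H : ∀ p q : Fin K, (p ∈ armClass S i₀ ∧ F < fv S v W p) →
            armRel S p q → (q ∈ armClass S i₀ ∧ F < fv S v W q) := by
          intro p q hp hpq
          by_contra hq
          exact hq (hcr p q hp hpq) |>.elim
        have hcl := closure_lemma S (fun i => i ∈ armClass S i₀ ∧ F < fv S v W i)
          (fun p q hp hpq => H p q hp hpq)
        have hgen : Relation.EqvGen (armRel S) j₀ k₀ :=
          Relation.EqvGen.trans _ _ _ (Relation.EqvGen.symm _ _ hj₀Q) hk₀Q
        have := (hcl j₀ k₀ hgen).mp ⟨hj₀Q, hj₀f⟩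
        exact hk₀f this.2
lemma choose_st {a b c d : ℝ} (ha : 0 < a) (hb : 0 < b) (hc : 0 < c) (hd : 0 < d)
    (hlt : a * d < b * c) :
    ∃ s t : ℝ, 0 < s ∧ 0 < t ∧ s < b ∧ t < c ∧
      (1 / (a + s) - 1 / a + (1 / (c - t) - 1 / c) < 0) ∧
      (1 / (d + t) - 1 / d + (1 / (b - s) - 1 / b) < 0) := by
  have hda : d * a < c * b := by nlinarith
  have hsq : d ^ 2 * a ^ 2 < c ^ 2 * b ^ 2 := by
    have h0 : 0 < (c * b - d * a) * (c * b + d * a) :=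
      mul_pos (by linarith) (by positivity)
    nlinarith
  have hrlt : d ^ 2 / b ^ 2 < c ^ 2 / a ^ 2 :=
    (div_lt_div_iff₀ (by positivity) (by positivity)).mpr hsq
  set r := (c ^ 2 / a ^ 2 + d ^ 2 / b ^ 2) / 2 with hrdef
  have hr1 : d ^ 2 / b ^ 2 < r := by rw [hrdef]; linarith
  have hr2 : r < c ^ 2 / a ^ 2 := by rw [hrdef]; linarith
  have hr0 : 0 < r := lt_trans (by positivity) hr1
  have hra : r * a ^ 2 < c ^ 2 := by
    have := (lt_div_iff₀ (by positivity : (0:ℝ) < a ^ 2)).mp hr2; linarith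
  have hrb : d ^ 2 < r * b ^ 2 := by
    have := (div_lt_iff₀ (by positivity : (0:ℝ) < b ^ 2)).mp hr1; linarith
  set s1 := (c ^ 2 - r * a ^ 2) / (r * (a + c)) with hs1def
  set s2 := (r * b ^ 2 - d ^ 2) / (r * (b + d)) with hs2def
  have hs1 : 0 < s1 := div_pos (by linarith) (by positivity)
  have hs2 : 0 < s2 := div_pos (by linarith) (by positivity)
  set X := min (min s1 s2) (min b (c / r)) with hXdef
  have hX : 0 < X := lt_min (lt_min hs1 hs2) (lt_min hb (div_pos hc hr0))
  have hXs1 : X / 2 < s1 :=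
    lt_of_lt_of_le (half_lt_self hX) (le_trans (min_le_left _ _) (min_le_left _ _))
  have hXs2 : X / 2 < s2 :=
    lt_of_lt_of_le (half_lt_self hX) (le_trans (min_le_left _ _) (min_le_right _ _))
  have hXb : X / 2 < b :=
    lt_of_lt_of_le (half_lt_self hX) (le_trans (min_le_right _ _) (min_le_left _ _))
  have hXcr : X / 2 < c / r :=
    lt_of_lt_of_le (half_lt_self hX) (le_trans (min_le_right _ _) (min_le_right _ _))
  have hs : 0 < X / 2 := by positivity
  have ht : 0 < r * (X / 2) := by positivity
  have htc : r * (X / 2) < c := by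
    have := (lt_div_iff₀ hr0).mp hXcr
    linarith [this, mul_comm (X / 2) r]
  refine ⟨X / 2, r * (X / 2), hs, ht, hXb, htc, ?_, ?_⟩
  · -- first inequality, via ineq1
    apply ineq1 ha hc hs ht htc
    have hk : X / 2 * (r * (a + c)) < c ^ 2 - r * a ^ 2 :=
      (lt_div_iff₀ (by positivity)).mp hXs1
    have h0 : 0 < X / 2 * (c ^ 2 - r * a ^ 2 - X / 2 * (r * (a + c))) :=
      mul_pos hs (by linarith)
    nlinarith [h0]
  · apply ineq1 hd hb ht hs hXb
    have hk : X / 2 * (r * (b + d)) < r * b ^ 2 - d ^ 2 :=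
      (lt_div_iff₀ (by positivity)).mp hXs2
    have h0 : 0 < X / 2 * (r * b ^ 2 - d ^ 2 - X / 2 * (r * (b + d))) :=
      mul_pos hs (by linarith)
    nlinarith [h0]

lemma exchange_contra (S : Fin M → Finset (Fin K)) (hS : ∀ m, 2 ≤ (S m).card)
    (hcov : ∀ i : Fin K, ∃ m, i ∈ S m) (v : Fin M → Fin K → ℝ) (hv : v ∈ PSet S)
    (ω : Fin M → Fin K → ℝ) (hω : IsCommonSol S v ω)
    (hpos : ∀ m, ∀ i ∈ S m, 0 < ω m i)
    (m₁ m₂ : Fin M) (i₁ i₂ : Fin K) (h11 : i₁ ∈ S m₁) (h21 : i₂ ∈ S m₁)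
    (h12 : i₁ ∈ S m₂) (h22 : i₂ ∈ S m₂) (hii : i₁ ≠ i₂) (hmm : m₁ ≠ m₂)
    (hlt : ω m₁ i₁ * ω m₂ i₂ < ω m₁ i₂ * ω m₂ i₁) : False := by
  have ha : 0 < ω m₁ i₁ := hpos m₁ i₁ h11
  have hb : 0 < ω m₁ i₂ := hpos m₁ i₂ h21
  have hc : 0 < ω m₂ i₁ := hpos m₂ i₁ h12
  have hd : 0 < ω m₂ i₂ := hpos m₂ i₂ h22
  obtain ⟨s, t, hs, ht, hsb, htc, hineqA, hineqB⟩ :=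
    choose_st ha hb hc hd hlt
  have hi₁Q : i₁ ∈ armClass S i₁ := Relation.EqvGen.refl i₁
  have hi₂Q : i₂ ∈ armClass S i₁ := Relation.EqvGen.rel _ _ ⟨m₁, h11, h21⟩
  have hFpos : 0 < gtildeC S v (armClass S i₁) ω :=
    gtildeC_sol_pos S hS hcov v hv ω hpos i₁
  -- the perturbed allocation
  set ω1 := tweak ω m₁ i₂ i₁ s with hω1def
  have hω1mem : ω1 ∈ Gam S :=
    tweak_mem_Gam S ω hω.1 h21 h11 (Ne.symm hii) (by linarith) (by linarith)
  have hb1 : ω1 m₂ i₁ = ω m₂ i₁ :=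
    tweak_other ω m₁ i₂ i₁ s m₂ i₁ (Or.inl (Ne.symm hmm))
  have hd1 : ω1 m₂ i₂ = ω m₂ i₂ :=
    tweak_other ω m₁ i₂ i₁ s m₂ i₂ (Or.inl (Ne.symm hmm))
  set ω2 := tweak ω1 m₂ i₁ i₂ t with hω2def
  have hω2mem : ω2 ∈ Gam S := by
    apply tweak_mem_Gam S ω1 hω1mem h12 h22 hii
    · rw [hb1]; linarith
    · rw [hd1]; linarith
  -- positivity of the new allocation
  have hpos2 : ∀ m', ∀ i ∈ S m', 0 < ω2 m' i := by
    intro m' i hi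
    by_cases hm2 : m' = m₂
    · subst hm2
      by_cases hi1 : i = i₁
      · subst hi1
        rw [hω2def, tweak_self_j ω1 m' t hii, hb1]; linarith
      by_cases hi2 : i = i₂
      · subst hi2
        rw [hω2def, tweak_self_k ω1 m' t hii, hd1]; linarith
      · rw [hω2def, tweak_other ω1 m' i₁ i₂ t m' i (Or.inr ⟨hi1, hi2⟩), hω1def,
          tweak_other ω m₁ i₂ i₁ s m' i (Or.inl (Ne.symm hmm))]
        exact hpos m' i hi
    · rw [hω2def, tweak_other ω1 m₂ i₁ i₂ t m' i (Or.inl hm2)]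
      by_cases hm1 : m' = m₁
      · subst hm1
        by_cases hi1 : i = i₁
        · subst hi1
          rw [hω1def, tweak_self_k ω m' s (Ne.symm hii)]; linarith
        by_cases hi2 : i = i₂
        · subst hi2
          rw [hω1def, tweak_self_j ω m' s (Ne.symm hii)]; linarith
        · rw [hω1def, tweak_other ω m' i₂ i₁ s m' i (Or.inr ⟨hi2, hi1⟩)]
          exact hpos m' i hi
      · rw [hω1def, tweak_other ω m₁ i₂ i₁ s m' i (Or.inl hm1)]
        exact hpos m' i hi
  -- armDenom comparisons
  have hw1 : 0 < 1 / (Mi S i₁ : ℝ) ^ 2 := by have := Mi_pos S hcov i₁; positivity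
  have hw2 : 0 < 1 / (Mi S i₂ : ℝ) ^ 2 := by have := Mi_pos S hcov i₂; positivity
  have e1 : armDenom S ω2 i₁ = armDenom S ω i₁
      + (1 / (Mi S i₁ : ℝ) ^ 2) *
        (1 / (ω m₁ i₁ + s) - 1 / (ω m₁ i₁) + (1 / (ω m₂ i₁ - t) - 1 / (ω m₂ i₁))) := by
    rw [hω2def, armDenom_tweak_j S ω1 t h12 hii, hb1, hω1def,
      armDenom_tweak_k S ω s h11 (Ne.symm hii)]
    ring
  have e2 : armDenom S ω2 i₂ = armDenom S ω i₂
      + (1 / (Mi S i₂ : ℝ) ^ 2) *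
        (1 / (ω m₂ i₂ + t) - 1 / (ω m₂ i₂) + (1 / (ω m₁ i₂ - s) - 1 / (ω m₁ i₂))) := by
    rw [hω2def, armDenom_tweak_k S ω1 t h22 hii, hd1, hω1def,
      armDenom_tweak_j S ω s h21 (Ne.symm hii)]
    ring
  have hD1lt : armDenom S ω2 i₁ < armDenom S ω i₁ := by
    rw [e1]
    have := mul_neg_of_pos_of_neg hw1 hineqA
    linarith
  have hD2lt : armDenom S ω2 i₂ < armDenom S ω i₂ := by
    rw [e2]
    have := mul_neg_of_pos_of_neg hw2 hineqB
    linarith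
  have hD1pos : 0 < armDenom S ω2 i₁ := armDenom_pos S hcov ω2 hpos2 i₁
  have hD2pos : 0 < armDenom S ω2 i₂ := armDenom_pos S hcov ω2 hpos2 i₂
  have hΔ1 : 0 < Delta S v i₁ := Delta_pos S hS hcov v hv i₁
  have hΔ2 : 0 < Delta S v i₂ := Delta_pos S hS hcov v hv i₂
  have hf1 : fv S v ω i₁ < fv S v ω2 i₁ :=
    div_lt_div_of_pos_left (by positivity) hD1pos hD1lt
  have hf2 : fv S v ω i₂ < fv S v ω2 i₂ :=
    div_lt_div_of_pos_left (by positivity) hD2pos hD2lt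
  have hfother : ∀ i : Fin K, i ≠ i₁ → i ≠ i₂ → fv S v ω2 i = fv S v ω i := by
    intro i hi1 hi2
    unfold fv
    rw [hω2def, armDenom_tweak_other S ω1 m₂ i₁ i₂ t i hi1 hi2, hω1def,
      armDenom_tweak_other S ω m₁ i₂ i₁ s i hi2 hi1]
  -- apply the propagation lemma
  apply MPL S hS hcov v hv i₁ (gtildeC S v (armClass S i₁) ω) hFpos (hω.2.2 i₁)
    (Finset.univ.filter
      (fun i => i ∈ armClass S i₁ ∧ ¬ gtildeC S v (armClass S i₁) ω < fv S v ω2 i)).card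
    ω2 hω2mem hpos2 ?_ ?_ le_rfl
  · intro i hi
    by_cases hi1 : i = i₁
    · subst hi1
      exact le_of_lt (lt_of_le_of_lt (gtildeC_le_fv S v _ ω hpos i hi) hf1)
    by_cases hi2 : i = i₂
    · subst hi2
      exact le_of_lt (lt_of_le_of_lt (gtildeC_le_fv S v _ ω hpos i hi) hf2)
    · rw [hfother i hi1 hi2]
      exact gtildeC_le_fv S v _ ω hpos i hi
  · exact ⟨i₁, hi₁Q, lt_of_le_of_lt (gtildeC_le_fv S v _ ω hpos i₁ hi₁Q) hf1⟩
/-- Lemma 12: a common solution satisfies the balanced condition. -/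
theorem stmt8 (K M : ℕ) (hK : 2 ≤ K) (hM : 1 ≤ M) (S : Fin M → Finset (Fin K))
    (hS : ∀ m, 2 ≤ (S m).card) (hcov : ∀ i : Fin K, ∃ m, i ∈ S m)
    (v : Fin M → Fin K → ℝ) (hv : v ∈ PSet S)
    (ω : Fin M → Fin K → ℝ) (hω : IsCommonSol S v ω) :
    BalancedCond S ω := by
  have hpos : ∀ m, ∀ i ∈ S m, 0 < ω m i := pos_of_sol S hS hcov v hv ω hω
  intro m₁ m₂ i₁ i₂ h11 h21 h12 h22
  by_cases hii : i₁ = i₂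
  · subst hii
    rw [div_self (hpos m₁ i₁ h21).ne', div_self (hpos m₂ i₁ h22).ne']
  by_cases hmm : m₁ = m₂
  · subst hmm; rfl
  rw [div_eq_div_iff (hpos m₁ i₂ h21).ne' (hpos m₂ i₂ h22).ne']
  by_contra hne
  rcases lt_or_gt_of_ne hne with h | h
  · exact exchange_contra S hS hcov v hv ω hω hpos m₁ m₂ i₁ i₂ h11 h21 h12 h22 hii hmm
      (by linarith [mul_comm (ω m₁ i₂) (ω m₂ i₁)])
  · exact exchange_contra S hS hcov v hv ω hω hpos m₁ m₂ i₂ i₁ h21 h11 h22 h12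
      (Ne.symm hii) hmm (by linarith [mul_comm (ω m₁ i₂) (ω m₂ i₁)])
end
end HetTS
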